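/- arXiv:2307.01218 — 2 statements merged into one kernel-verified Lean document; each statement's English description precedes it below -/
import Mathlib

section
/- Let G = (V,E) be a finite simple graph on n vertices, let L_G be its Laplacian matrix with eigenvalues λ₁(G) ≤ … ≤ λₙ(G) in non-decreasing order, and let {u,v} ∈ E be an edge of G. Let G' = (V, E \ {{u,v}}) be the graph obtained from G by removing the edge {u,v}, with Laplacian eigenvalues λ₁(G') ≤ … ≤ λₙ(G'). Then for every i ∈ {1,…,n}, λ_i(G') ≥ (1 − R_G(u,v)) · λ_i(G), where R_G(u,v) is the u–v effective resistance of G. -/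
open Matrix

/-- The eigenvalues of a real symmetric matrix, listed in non-decreasing order
(with multiplicity); junk value `0` if the matrix is not symmetric. -/
noncomputable def sortedEigenvalues {n : ℕ} (M : Matrix (Fin n) (Fin n) ℝ) : Fin n → ℝ :=
  if h : M.IsHermitian then h.eigenvalues ∘ Tuple.sort h.eigenvalues else 0

open Classical in
/-- The Dirichlet energy `Σ_{{u,v} ∈ E} (φ u - φ v)²` of a potential `φ`,
written as half the sum over ordered pairs. -/
noncomputable def energy {V : Type*} [Fintype V] (G : SimpleGraph V) (φ : V → ℝ) : ℝ :=
  (1/2) * ∑ u : V, ∑ v : V, if G.Adj u v then (φ u - φ v)^2 else 0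

/-- The `s`-`t` effective resistance: the reciprocal of the minimal Dirichlet energy among
potentials with `φ s = 1` and `φ t = 0`. -/
noncomputable def effRes {V : Type*} [Fintype V] (G : SimpleGraph V) (s t : V) : ℝ :=
  1 / sInf (energy G '' {φ : V → ℝ | φ s = 1 ∧ φ t = 0})

open Classical in
/-- The (real) Laplacian matrix of a graph on `Fin n`. -/
noncomputable def lap {n : ℕ} (G : SimpleGraph (Fin n)) : Matrix (Fin n) (Fin n) ℝ :=
  G.lapMatrix ℝ
/-!
Deleting the edge `uv` lowers the Laplacian quadratic form by exactly `(x u - x v)²`, and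
rescaling `x` to a potential taking the values `1` and `0` at `u` and `v` gives
`(x u - x v)² ≤ R_G(u,v) · xᵀ L_G x`. Hence `(1 - R_G(u,v)) L_G ≤ L_{G'}` as quadratic forms.
Courant–Fischer then compares the eigenvalues: a nonzero vector orthogonal to the eigenvectors of
`L_G` below index `i` and to those of `L_{G'}` above it exists by counting dimensions, and its
Rayleigh quotients are at least `λᵢ(G)` and at most `λᵢ(G')`.
-/

open scoped RealInnerProductSpace

section RayleighQuotient

variable {E : Type*} [NormedAddCommGroup E] [InnerProductSpace ℝ E] {ι : Type*} [Fintype ι]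
  (b : OrthonormalBasis ι ℝ E) {T : E →ₗ[ℝ] E} {μ : ι → ℝ}

theorem OrthonormalBasis.inner_map_self_eq_sum
    (hT : ∀ k, T (b k) = μ k • b k) (x : E) :
    ⟪x, T x⟫ = ∑ k, μ k * ⟪b k, x⟫ ^ 2 := by
  nth_rw 2 [← b.sum_repr' x]
  simp only [map_sum, map_smul, hT, smul_smul, inner_sum, inner_smul_right, real_inner_comm x]
  exact Finset.sum_congr rfl fun k _ => by ring

theorem OrthonormalBasis.norm_sq_eq_sum_inner_sq (x : E) : ‖x‖ ^ 2 = ∑ k, ⟪b k, x⟫ ^ 2 := by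
  simpa using (b.sum_sq_norm_inner_right x).symm

variable [LinearOrder ι]

theorem OrthonormalBasis.mul_norm_sq_le_inner_map_self (hμ : Monotone μ)
    (hT : ∀ k, T (b k) = μ k • b k) {i : ι} {x : E} (hx : ∀ k < i, ⟪b k, x⟫ = 0) :
    μ i * ‖x‖ ^ 2 ≤ ⟪x, T x⟫ := by
  rw [b.inner_map_self_eq_sum hT, b.norm_sq_eq_sum_inner_sq, Finset.mul_sum]
  refine Finset.sum_le_sum fun k _ => ?_
  rcases lt_or_ge k i with hk | hk
  · simp [hx k hk]
  · exact mul_le_mul_of_nonneg_right (hμ hk) (sq_nonneg _)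

theorem OrthonormalBasis.inner_map_self_le_mul_norm_sq (hμ : Monotone μ)
    (hT : ∀ k, T (b k) = μ k • b k) {i : ι} {x : E} (hx : ∀ k > i, ⟪b k, x⟫ = 0) :
    ⟪x, T x⟫ ≤ μ i * ‖x‖ ^ 2 := by
  rw [b.inner_map_self_eq_sum hT, b.norm_sq_eq_sum_inner_sq, Finset.mul_sum]
  refine Finset.sum_le_sum fun k _ => ?_
  rcases lt_or_ge i k with hk | hk
  · simp [hx k hk]
  · exact mul_le_mul_of_nonneg_right (hμ hk) (sq_nonneg _)

end RayleighQuotient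

theorem exists_ne_zero_forall_inner_eq_zero {E : Type*} [NormedAddCommGroup E]
    [InnerProductSpace ℝ E] [FiniteDimensional ℝ E] {κ : Type*} [Fintype κ] (v : κ → E)
    (h : Fintype.card κ < Module.finrank ℝ E) : ∃ z ≠ 0, ∀ k, ⟪v k, z⟫ = 0 := by
  let f : E →ₗ[ℝ] κ → ℝ := LinearMap.pi fun k => innerₛₗ ℝ (v k)
  obtain ⟨z, hker, hz⟩ := Submodule.exists_mem_ne_zero_of_ne_bot
    (f.ker_ne_bot_of_finrank_lt (by simpa using h))
  exact ⟨z, hz, fun k => congrFun hker k⟩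

theorem mul_le_of_forall_mul_inner_map_self_le {E : Type*} [NormedAddCommGroup E]
    [InnerProductSpace ℝ E] {n : ℕ} {T S : E →ₗ[ℝ] E} (bT bS : OrthonormalBasis (Fin n) ℝ E)
    {μ ν : Fin n → ℝ} (hμ : Monotone μ) (hν : Monotone ν) (hT : ∀ k, T (bT k) = μ k • bT k)
    (hS : ∀ k, S (bS k) = ν k • bS k) {c : ℝ} (hc : 0 ≤ c)
    (h : ∀ x, c * ⟪x, T x⟫ ≤ ⟪x, S x⟫) (i : Fin n) : c * μ i ≤ ν i := by
  have : FiniteDimensional ℝ E := .of_basis bT.toBasis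
  have hdim : Module.finrank ℝ E = n := by simpa using Module.finrank_eq_card_basis bT.toBasis
  obtain ⟨z, hz, hzi⟩ := exists_ne_zero_forall_inner_eq_zero
    (fun k : {k // k ≠ i} => if (k : Fin n) < i then bT k else bS k)
    (by simp [Fintype.card_subtype_compl, hdim, i.pos])
  have hzT : ∀ k < i, ⟪bT k, z⟫ = 0 := fun k hk => by simpa [hk] using hzi ⟨k, hk.ne⟩
  have hzS : ∀ k > i, ⟪bS k, z⟫ = 0 := fun k hk => by
    simpa [not_lt_of_gt hk] using hzi ⟨k, hk.ne'⟩
  have hz2 : 0 < ‖z‖ ^ 2 := by positivity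
  refine le_of_mul_le_mul_right ?_ hz2
  calc c * μ i * ‖z‖ ^ 2 = c * (μ i * ‖z‖ ^ 2) := mul_assoc ..
    _ ≤ c * ⟪z, T z⟫ := mul_le_mul_of_nonneg_left (bT.mul_norm_sq_le_inner_map_self hμ hT hzT) hc
    _ ≤ ⟪z, S z⟫ := h z
    _ ≤ ν i * ‖z‖ ^ 2 := bS.inner_map_self_le_mul_norm_sq hν hS hzS

namespace Matrix.IsHermitian

variable {n : ℕ} {A : Matrix (Fin n) (Fin n) ℝ}

theorem sortedEigenvalues_eq (hA : A.IsHermitian) :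
    sortedEigenvalues A = hA.eigenvalues ∘ Tuple.sort hA.eigenvalues :=
  dif_pos hA

theorem monotone_sortedEigenvalues (hA : A.IsHermitian) : Monotone (sortedEigenvalues A) :=
  hA.sortedEigenvalues_eq ▸ Tuple.monotone_sort _

noncomputable def sortedEigenvectorBasis (hA : A.IsHermitian) :
    OrthonormalBasis (Fin n) ℝ (EuclideanSpace ℝ (Fin n)) :=
  hA.eigenvectorBasis.reindex (Tuple.sort hA.eigenvalues).symm

theorem toEuclideanLin_sortedEigenvectorBasis (hA : A.IsHermitian) (k : Fin n) :
    toEuclideanLin A (hA.sortedEigenvectorBasis k) =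
      sortedEigenvalues A k • hA.sortedEigenvectorBasis k := by
  ext1
  simp [sortedEigenvectorBasis, hA.sortedEigenvalues_eq, hA.mulVec_eigenvectorBasis]

end Matrix.IsHermitian

theorem Matrix.inner_toEuclideanLin_self {n : Type*} [Fintype n] [DecidableEq n]
    (A : Matrix n n ℝ) (x : EuclideanSpace ℝ n) : ⟪x, toEuclideanLin A x⟫ = x ⬝ᵥ A *ᵥ x := by
  simp [EuclideanSpace.inner_eq_star_dotProduct, dotProduct_comm]

theorem Matrix.IsHermitian.mul_sortedEigenvalues_le {n : ℕ} {A B : Matrix (Fin n) (Fin n) ℝ}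
    (hA : A.IsHermitian) (hB : B.IsHermitian) {c : ℝ} (hc : 0 ≤ c)
    (h : ∀ x, c * (x ⬝ᵥ A *ᵥ x) ≤ x ⬝ᵥ B *ᵥ x) (i : Fin n) :
    c * sortedEigenvalues A i ≤ sortedEigenvalues B i :=
  mul_le_of_forall_mul_inner_map_self_le _ _ hA.monotone_sortedEigenvalues
    hB.monotone_sortedEigenvalues hA.toEuclideanLin_sortedEigenvectorBasis
    hB.toEuclideanLin_sortedEigenvectorBasis hc
    (fun x => by simpa only [inner_toEuclideanLin_self] using h x) i

namespace SimpleGraph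

variable {V : Type*} [Fintype V] (G : SimpleGraph V)

theorem energy_nonneg (φ : V → ℝ) : 0 ≤ energy G φ := by
  unfold energy
  positivity

theorem dotProduct_lapMatrix_mulVec [DecidableEq V] [DecidableRel G.Adj] (x : V → ℝ) :
    x ⬝ᵥ G.lapMatrix ℝ *ᵥ x = energy G x := by
  rw [← toLinearMap₂'_apply', lapMatrix_toLinearMap₂', energy, div_eq_inv_mul, one_div]
  congr!

theorem energy_sub_div (φ : V → ℝ) (a c : ℝ) :
    energy G (fun w => (φ w - a) / c) = energy G φ / c ^ 2 := by
  simp only [energy, mul_div_assoc, Finset.sum_div]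
  congr 2 with w
  refine Finset.sum_congr rfl fun w' _ => ?_
  split_ifs <;> ring

variable {G} {u v : V}

theorem energy_deleteEdges (huv : G.Adj u v) (φ : V → ℝ) :
    energy (G.deleteEdges {s(u, v)}) φ = energy G φ - (φ u - φ v) ^ 2 := by
  classical
  rw [eq_sub_iff_add_eq, eq_comm]
  have split_adj : ∀ a b, (if G.Adj a b then (φ a - φ b) ^ 2 else 0) =
      (if (G.deleteEdges {s(u, v)}).Adj a b then (φ a - φ b) ^ 2 else 0) +
        (if a = u ∧ b = v then (φ a - φ b) ^ 2 else 0) +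
        (if a = v ∧ b = u then (φ a - φ b) ^ 2 else 0) := by
    intro a b
    by_cases hab : a = u ∧ b = v
    · obtain ⟨rfl, rfl⟩ := hab
      simp [huv, huv.ne]
    by_cases hba : a = v ∧ b = u
    · obtain ⟨rfl, rfl⟩ := hba
      simp [huv.symm, huv.ne]
    simp [deleteEdges_adj, hab, hba]
  simp only [energy, split_adj, Finset.sum_add_distrib, ite_and, Finset.sum_ite_irrel,
    Finset.sum_const_zero, Finset.sum_ite_eq', Finset.mem_univ, if_true]
  -- not `ring`: the two sums over `G.deleteEdges` carry different (defeq) `Decidable` instances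
  ring_nf

theorem sq_sub_le_energy (huv : G.Adj u v) (φ : V → ℝ) : (φ u - φ v) ^ 2 ≤ energy G φ := by
  linarith [energy_deleteEdges huv φ, energy_nonneg (G.deleteEdges {s(u, v)}) φ]

theorem one_le_sInf_energy (huv : G.Adj u v) :
    1 ≤ sInf (energy G '' {φ : V → ℝ | φ u = 1 ∧ φ v = 0}) := by
  classical
  refine le_csInf ⟨_, Pi.single u 1, ⟨by simp, by simp [huv.ne']⟩, rfl⟩ ?_
  rintro _ ⟨φ, ⟨hφu, hφv⟩, rfl⟩
  simpa [hφu, hφv] using sq_sub_le_energy huv φ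

theorem effRes_le_one (huv : G.Adj u v) : effRes G u v ≤ 1 :=
  div_le_one_of_le₀ (one_le_sInf_energy huv) (zero_le_one.trans (one_le_sInf_energy huv))

theorem sq_sub_le_effRes_mul_energy (huv : G.Adj u v) (φ : V → ℝ) :
    (φ u - φ v) ^ 2 ≤ effRes G u v * energy G φ := by
  set Emin := sInf (energy G '' {φ : V → ℝ | φ u = 1 ∧ φ v = 0})
  have hEmin : 0 < Emin := one_pos.trans_le (one_le_sInf_energy huv)
  have hR : effRes G u v = Emin⁻¹ := one_div Emin
  rcases eq_or_ne (φ u) (φ v) with hφ | hφ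
  · simpa [hφ, hR] using mul_nonneg (inv_nonneg.2 hEmin.le) (energy_nonneg G φ)
  have hc : 0 < (φ u - φ v) ^ 2 := by positivity [sub_ne_zero.2 hφ]
  have hle : Emin ≤ energy G φ / (φ u - φ v) ^ 2 := by
    rw [← energy_sub_div]
    refine csInf_le ⟨0, ?_⟩ ⟨_, ⟨div_self (sub_ne_zero.2 hφ), by simp⟩, rfl⟩
    rintro _ ⟨ψ, -, rfl⟩
    exact energy_nonneg G ψ
  rw [le_div_iff₀ hc] at hle
  rw [hR, inv_mul_eq_div, le_div_iff₀ hEmin]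
  linarith

end SimpleGraph

open SimpleGraph

theorem isHermitian_lap {n : ℕ} (G : SimpleGraph (Fin n)) : (lap G).IsHermitian := by
  classical
  exact (posSemidef_lapMatrix ℝ G).isHermitian

theorem dotProduct_lap_mulVec {n : ℕ} (G : SimpleGraph (Fin n)) (x : Fin n → ℝ) :
    x ⬝ᵥ lap G *ᵥ x = energy G x := by
  classical
  exact dotProduct_lapMatrix_mulVec G x

/-- **Laplacian eigenvalues after removing an edge.**
If `G'` is obtained from `G` by removing an edge `{u,v}`, then for every `i`,
`λᵢ(G') ≥ (1 − R_G(u,v)) · λᵢ(G)`, where `R_G(u,v)` is the effective resistance. -/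
theorem lap_eigenvalue_removing_edge_eff_res
    {n : ℕ} (G : SimpleGraph (Fin n)) (u v : Fin n) (huv : G.Adj u v) (i : Fin n) :
    (1 - effRes G u v) * sortedEigenvalues (lap G) i ≤
      sortedEigenvalues (lap (G.deleteEdges {s(u, v)})) i := by
  refine (isHermitian_lap G).mul_sortedEigenvalues_le (isHermitian_lap _)
    (sub_nonneg.2 (effRes_le_one huv)) (fun x => ?_) i
  rw [dotProduct_lap_mulVec, dotProduct_lap_mulVec, energy_deleteEdges huv x]
  linarith [sq_sub_le_effRes_mul_energy huv x]
end

section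
/- (Min-max duality for effective resistance.) Let G = (V,E) be a connected finite simple graph on n ≥ 2 vertices with Laplacian L_G, and let s ≠ t be two vertices. Then the reciprocal of the energy minimum equals the maximal Rayleigh-type ratio: 1 / min{ Σ_{{u,v}∈E} (φ(u)−φ(v))² : φ : V → ℝ, φ(s)=1, φ(t)=0 } = sup{ ⟨𝟏_s − 𝟏_t, φ⟩² / (φᵀ L_G φ) : φ : V → ℝ, φ ⊥ 𝟏, φ ≠ 0 }, and the supremum is attained; in other words, R_G(s,t) = max_{φ ⊥ 𝟏, φ ≠ 0} ⟨𝟏_s − 𝟏_t, φ⟩² / (φᵀ L_G φ). -/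
/-!
Let `x` solve `L x = 𝟙_s - 𝟙_t` with `∑ x = 0`; it exists because on a connected graph the
range of `L` is `𝟙^⊥`. Then `φ ⬝ᵥ L x = φ s - φ t` for every `φ`, so Cauchy–Schwarz for the
semidefinite form of `L` gives `(φ s - φ t)² ≤ (φ ⬝ᵥ L φ) (x s - x t)`, with equality at `φ = x`.
For `φ s = 1`, `φ t = 0` this shows that the minimal energy is `1 / (x s - x t)`, attained by
`x` shifted and rescaled; for `φ ⊥ 𝟙`, `φ ≠ 0`, where `φ ⬝ᵥ L φ > 0`, it bounds every ratio by
`x s - x t`, attained at `φ = x`.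
-/

open Matrix

namespace Matrix.PosSemidef

variable {ι : Type*} [Fintype ι] {M : Matrix ι ι ℝ}

theorem dotProduct_mulVec_comm (hM : M.PosSemidef) (x y : ι → ℝ) :
    x ⬝ᵥ (M *ᵥ y) = y ⬝ᵥ (M *ᵥ x) := by
  rw [dotProduct_mulVec, ← mulVec_transpose, dotProduct_comm,
    ← conjTranspose_eq_transpose_of_trivial, hM.isHermitian.eq]

theorem dotProduct_mulVec_self_nonneg (hM : M.PosSemidef) (x : ι → ℝ) :
    0 ≤ x ⬝ᵥ (M *ᵥ x) := by
  simpa only [star_trivial] using hM.dotProduct_mulVec_nonneg x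

theorem dotProduct_mulVec_sq_le (hM : M.PosSemidef) (x y : ι → ℝ) :
    (x ⬝ᵥ (M *ᵥ y)) ^ 2 ≤ (x ⬝ᵥ (M *ᵥ x)) * (y ⬝ᵥ (M *ᵥ y)) := by
  have hquad : ∀ c : ℝ,
      0 ≤ (y ⬝ᵥ (M *ᵥ y)) * (c * c) + 2 * (x ⬝ᵥ (M *ᵥ y)) * c + x ⬝ᵥ (M *ᵥ x) := by
    intro c
    have h := hM.dotProduct_mulVec_self_nonneg (x + c • y)
    simp only [mulVec_add, mulVec_smul, dotProduct_add, add_dotProduct, dotProduct_smul,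
      smul_dotProduct, smul_eq_mul, hM.dotProduct_mulVec_comm y x] at h
    linarith
  have := discrim_le_zero hquad
  rw [discrim] at this
  nlinarith

end Matrix.PosSemidef

namespace SimpleGraph

variable {V : Type*} [Fintype V] [DecidableEq V]

section

variable (G : SimpleGraph V) [DecidableRel G.Adj]

theorem energy_eq_dotProduct_lapMatrix_mulVec (φ : V → ℝ) :
    energy G φ = φ ⬝ᵥ (G.lapMatrix ℝ *ᵥ φ) := by
  rw [← toLinearMap₂'_apply', lapMatrix_toLinearMap₂', energy, one_div_mul_eq_div]
  congr!

theorem one_dotProduct_lapMatrix_mulVec (x : V → ℝ) : 1 ⬝ᵥ (G.lapMatrix ℝ *ᵥ x) = 0 := by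
  rw [dotProduct_mulVec, ← mulVec_transpose, (isSymm_lapMatrix ℝ G).eq, Pi.one_def,
    lapMatrix_mulVec_const_eq_zero, zero_dotProduct]

theorem lapMatrix_mulVec_const (c : ℝ) : G.lapMatrix ℝ *ᵥ (fun _ => c) = 0 := by
  ext i
  simp [lapMatrix_mulVec_apply]

theorem finrank_ker_toLin'_lapMatrix (hG : G.Connected) :
    Module.finrank ℝ (LinearMap.ker (toLin' (G.lapMatrix ℝ))) = 1 := by
  have := hG.preconnected.subsingleton_connectedComponent
  have := hG.nonempty
  rw [← card_connectedComponent_eq_finrank_ker_toLin'_lapMatrix]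
  exact le_antisymm (Fintype.card_le_one_iff_subsingleton.2 ‹_›) Fintype.card_pos

theorem range_toLin'_lapMatrix (hG : G.Connected) :
    LinearMap.range (toLin' (G.lapMatrix ℝ)) =
      LinearMap.ker (dotProductBilin ℝ ℝ (1 : V → ℝ)) := by
  set T := toLin' (G.lapMatrix ℝ)
  set f := dotProductBilin ℝ ℝ (1 : V → ℝ)
  have hle : LinearMap.range T ≤ LinearMap.ker f := by
    rintro _ ⟨x, rfl⟩
    exact one_dotProduct_lapMatrix_mulVec G x
  have hsurj : LinearMap.range f = ⊤ := by
    obtain ⟨v⟩ := hG.nonempty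
    refine LinearMap.range_eq_top.2 fun c => ⟨Pi.single v c, ?_⟩
    simp [f]
  have hT := LinearMap.finrank_range_add_finrank_ker T
  have hf := LinearMap.finrank_range_add_finrank_ker f
  rw [finrank_ker_toLin'_lapMatrix G hG] at hT
  rw [hsurj, finrank_top, Module.finrank_self] at hf
  exact Submodule.eq_of_le_of_finrank_eq hle (by omega)

theorem exists_sum_eq_zero_lapMatrix_mulVec_eq (hG : G.Connected) {b : V → ℝ}
    (hb : ∑ i, b i = 0) : ∃ x : V → ℝ, ∑ i, x i = 0 ∧ G.lapMatrix ℝ *ᵥ x = b := by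
  have hmem : b ∈ LinearMap.ker (dotProductBilin ℝ ℝ (1 : V → ℝ)) := by
    simpa [one_dotProduct] using hb
  rw [← range_toLin'_lapMatrix G hG] at hmem
  obtain ⟨y, hy⟩ := hmem
  have := hG.nonempty
  have hcard : (Fintype.card V : ℝ) ≠ 0 := Nat.cast_ne_zero.2 Fintype.card_ne_zero
  refine ⟨y - fun _ => (∑ i, y i) / Fintype.card V, ?_, ?_⟩
  · simp [Finset.sum_sub_distrib, mul_div_cancel₀ _ hcard]
  · rw [mulVec_sub, lapMatrix_mulVec_const, sub_zero, ← hy, toLin'_apply]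

theorem dotProduct_lapMatrix_mulVec_pos (hG : G.Connected) {φ : V → ℝ} (hsum : ∑ i, φ i = 0)
    (hφ : φ ≠ 0) : 0 < φ ⬝ᵥ (G.lapMatrix ℝ *ᵥ φ) := by
  have hpsd := posSemidef_lapMatrix ℝ G
  refine (hpsd.dotProduct_mulVec_self_nonneg φ).lt_of_ne' fun h => hφ ?_
  have hker : G.lapMatrix ℝ *ᵥ φ = 0 := (hpsd.dotProduct_mulVec_zero_iff φ).1 (by simpa using h)
  have hconst : ∀ i j, φ i = φ j := fun i j =>
    (lapMatrix_mulVec_eq_zero_iff_forall_reachable G).1 hker i j (hG.preconnected i j)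
  obtain ⟨v⟩ := hG.nonempty
  have hv : φ v = 0 := by
    simp only [hconst _ v, Finset.sum_const, Finset.card_univ, nsmul_eq_mul, mul_eq_zero,
      Nat.cast_eq_zero] at hsum
    exact hsum.resolve_left (Fintype.card_pos_iff.2 ⟨v⟩).ne'
  funext i
  rw [hconst i v, hv, Pi.zero_apply]

end

section

variable {G : SimpleGraph V} [DecidableRel G.Adj] {s t : V} {x : V → ℝ}

theorem dotProduct_lapMatrix_mulVec_eq_sub
    (hx : G.lapMatrix ℝ *ᵥ x = Pi.single s 1 - Pi.single t 1) (φ : V → ℝ) :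
    φ ⬝ᵥ (G.lapMatrix ℝ *ᵥ x) = φ s - φ t := by
  rw [hx, dotProduct_sub, dotProduct_single, dotProduct_single, mul_one, mul_one]

theorem sq_sub_le_mul_of_lapMatrix_mulVec_eq
    (hx : G.lapMatrix ℝ *ᵥ x = Pi.single s 1 - Pi.single t 1) (φ : V → ℝ) :
    (φ s - φ t) ^ 2 ≤ φ ⬝ᵥ (G.lapMatrix ℝ *ᵥ φ) * (x s - x t) := by
  have := (posSemidef_lapMatrix ℝ G).dotProduct_mulVec_sq_le φ x
  rwa [dotProduct_lapMatrix_mulVec_eq_sub hx, dotProduct_lapMatrix_mulVec_eq_sub hx] at this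

theorem sub_pos_of_lapMatrix_mulVec_eq (hst : s ≠ t)
    (hx : G.lapMatrix ℝ *ᵥ x = Pi.single s 1 - Pi.single t 1) : 0 < x s - x t := by
  have hpsd := posSemidef_lapMatrix ℝ G
  have hR : 0 ≤ x s - x t :=
    dotProduct_lapMatrix_mulVec_eq_sub hx x ▸ hpsd.dotProduct_mulVec_self_nonneg x
  have h := sq_sub_le_mul_of_lapMatrix_mulVec_eq hx (Pi.single s 1)
  simp only [Pi.single_eq_same, Pi.single_eq_of_ne' hst, sub_zero, one_pow] at h
  nlinarith [hpsd.dotProduct_mulVec_self_nonneg (Pi.single s 1)]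

/-- Thomson's principle; the minimiser is `(x - x t) / (x s - x t)`. -/
theorem effRes_eq_of_lapMatrix_mulVec_eq (hst : s ≠ t)
    (hx : G.lapMatrix ℝ *ᵥ x = Pi.single s 1 - Pi.single t 1) : effRes G s t = x s - x t := by
  set R := x s - x t
  have hR : 0 < R := sub_pos_of_lapMatrix_mulVec_eq hst hx
  have hmin : IsLeast (energy G '' {φ | φ s = 1 ∧ φ t = 0}) (1 / R) := by
    constructor
    · set ψ : V → ℝ := R⁻¹ • (x - fun _ => x t)
      have hψs : ψ s = 1 := by simp [ψ, R, hR.ne']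
      have hψt : ψ t = 0 := by simp [ψ]
      have hLψ : G.lapMatrix ℝ *ᵥ ψ = R⁻¹ • (G.lapMatrix ℝ *ᵥ x) := by
        rw [mulVec_smul, mulVec_sub, lapMatrix_mulVec_const, sub_zero]
      refine ⟨ψ, ⟨hψs, hψt⟩, ?_⟩
      rw [energy_eq_dotProduct_lapMatrix_mulVec, hLψ, dotProduct_smul,
        dotProduct_lapMatrix_mulVec_eq_sub hx, hψs, hψt, smul_eq_mul, sub_zero, mul_one, one_div]
    · rintro _ ⟨ψ, ⟨hψs, hψt⟩, rfl⟩
      have h := sq_sub_le_mul_of_lapMatrix_mulVec_eq hx ψ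
      rw [hψs, hψt, sub_zero, one_pow, ← energy_eq_dotProduct_lapMatrix_mulVec] at h
      rwa [div_le_iff₀ hR]
  rw [effRes, hmin.csInf_eq, one_div_one_div]

end

end SimpleGraph

theorem effRes_minmax_duality_general
    (n : ℕ) (G : SimpleGraph (Fin n)) (hG : G.Connected)
    (s t : Fin n) (hst : s ≠ t) :
    IsGreatest
      {r : ℝ | ∃ φ : Fin n → ℝ, (∑ w : Fin n, φ w = 0) ∧ φ ≠ 0 ∧
        r = (φ s - φ t)^2 / (φ ⬝ᵥ (lap G *ᵥ φ))}
      (effRes G s t) := by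
  classical
  obtain ⟨x, hxsum, hx⟩ := SimpleGraph.exists_sum_eq_zero_lapMatrix_mulVec_eq G hG
    (b := Pi.single s 1 - Pi.single t 1) (by simp [Finset.sum_sub_distrib])
  have hR := SimpleGraph.sub_pos_of_lapMatrix_mulVec_eq hst hx
  rw [SimpleGraph.effRes_eq_of_lapMatrix_mulVec_eq hst hx]
  refine ⟨⟨x, hxsum, ?_, ?_⟩, ?_⟩
  · rintro rfl
    simp at hR
  · rw [lap, SimpleGraph.dotProduct_lapMatrix_mulVec_eq_sub hx, sq, mul_div_cancel_right₀ _ hR.ne']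
  · rintro _ ⟨φ, hφsum, hφ, rfl⟩
    rw [lap, div_le_iff₀ (SimpleGraph.dotProduct_lapMatrix_mulVec_pos G hG hφsum hφ), mul_comm]
    exact SimpleGraph.sq_sub_le_mul_of_lapMatrix_mulVec_eq hx φ

/-- **Min-max duality for effective resistance.**
For a connected graph `G` on `n ≥ 2` vertices and distinct vertices `s ≠ t`, the effective
resistance `R_G(s,t) = 1 / min { Σ_{{u,v}∈E} (φ u - φ v)² : φ s = 1, φ t = 0 }` is the
greatest element (so the supremum, and it is attained) of the set of Rayleigh-type ratios
`⟨𝟙_s - 𝟙_t, φ⟩² / (φᵀ L_G φ)` over all `φ ⊥ 𝟙`, `φ ≠ 0`. -/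
theorem effRes_minmax_duality
    (n : ℕ) (hn : 2 ≤ n) (G : SimpleGraph (Fin n)) (hG : G.Connected)
    (s t : Fin n) (hst : s ≠ t) :
    IsGreatest
      {r : ℝ | ∃ φ : Fin n → ℝ, (∑ w : Fin n, φ w = 0) ∧ φ ≠ 0 ∧
        r = (φ s - φ t)^2 / (φ ⬝ᵥ (lap G *ᵥ φ))}
      (effRes G s t) :=
  effRes_minmax_duality_general n G hG s t hst
end
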